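/- Let n ≥ 2, let D be the (n-1)×n difference matrix (D_{i,i}=1, D_{i,i+1}=-1, else 0), and let A = (a_{ij}) be an n×n real matrix. Then there exists a matrix Ã ∈ ℝ^{(n-1)×(n-1)} with D A = Ã D if and only if all row sums of A are equal, i.e., ∑_{ℓ=1}^n a_{iℓ} = ∑_{ℓ=1}^n a_{jℓ} for all i, j. -/

import Mathlib

/-- The (n-1)×n difference matrix: row i has 1 in column i and -1 in column i+1. -/
def diffMatrix (n : ℕ) : Matrix (Fin (n - 1)) (Fin n) ℝ :=
  fun i j => if (j : ℕ) = (i : ℕ) then 1 else if (j : ℕ) = (i : ℕ) + 1 then -1 else 0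

lemma sum_ite_nat {n : ℕ} (g : Fin n → ℝ) (a : ℕ) (ha : a < n) :
    (∑ ℓ : Fin n, if (ℓ : ℕ) = a then g ℓ else 0) = g ⟨a, ha⟩ := by
  have h : ∀ ℓ : Fin n, ((ℓ : ℕ) = a) = (ℓ = ⟨a, ha⟩) := fun ℓ => by
    simp [Fin.ext_iff]
  simp only [h]
  simp

lemma fin_lt {n : ℕ} (i : Fin (n - 1)) : (i : ℕ) < n :=
  i.isLt.trans_le (Nat.sub_le n 1)

lemma fin_succ_lt {n : ℕ} (i : Fin (n - 1)) : (i : ℕ) + 1 < n := by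
  have := i.isLt
  omega

lemma DA_entry {n : ℕ} (A : Matrix (Fin n) (Fin n) ℝ) (i : Fin (n - 1)) (j : Fin n) :
    (diffMatrix n * A) i j = A ⟨i, fin_lt i⟩ j - A ⟨(i : ℕ) + 1, fin_succ_lt i⟩ j := by
  have key : ∀ ℓ : Fin n, diffMatrix n i ℓ * A ℓ j =
      (if (ℓ : ℕ) = (i : ℕ) then A ℓ j else 0) +
      (if (ℓ : ℕ) = (i : ℕ) + 1 then -A ℓ j else 0) := by
    intro ℓ
    unfold diffMatrix
    split_ifs with h1 h2 <;> first | omega | ring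
  rw [Matrix.mul_apply]
  simp only [key]
  rw [Finset.sum_add_distrib, sum_ite_nat (fun ℓ => A ℓ j) _ (fin_lt i),
    sum_ite_nat (fun ℓ => -A ℓ j) _ (fin_succ_lt i)]
  ring

lemma D_row_sum {n : ℕ} (k : Fin (n - 1)) : (∑ j, diffMatrix n k j) = 0 := by
  have key : ∀ j : Fin n, diffMatrix n k j =
      (if (j : ℕ) = (k : ℕ) then (1 : ℝ) else 0) +
      (if (j : ℕ) = (k : ℕ) + 1 then (-1 : ℝ) else 0) := by
    intro j
    unfold diffMatrix
    split_ifs with h1 h2 <;> first | omega | ring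
  simp only [key]
  rw [Finset.sum_add_distrib, sum_ite_nat (fun _ => (1:ℝ)) _ (fin_lt k),
    sum_ite_nat (fun _ => (-1:ℝ)) _ (fin_succ_lt k)]
  ring


lemma nsub2_lt {n : ℕ} (h : 2 ≤ n) : n - 2 < n - 1 := by omega

lemma nsub1_lt {n : ℕ} (h : 2 ≤ n) : n - 1 < n := by omega

/-- Partial sums of consecutive row differences. -/
def psum {n : ℕ} (A : Matrix (Fin n) (Fin n) ℝ) (i k : Fin (n - 1)) : ℝ :=
  ∑ ℓ : Fin n, if (ℓ : ℕ) ≤ (k : ℕ) then A ⟨i, fin_lt i⟩ ℓ - A ⟨(i : ℕ) + 1, fin_succ_lt i⟩ ℓ else 0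

theorem stmt1 (n : ℕ) (hn : 2 ≤ n) (A : Matrix (Fin n) (Fin n) ℝ) :
    (∃ Atil : Matrix (Fin (n - 1)) (Fin (n - 1)) ℝ,
        diffMatrix n * A = Atil * diffMatrix n) ↔
      ∀ i j : Fin n, (∑ ℓ, A i ℓ) = ∑ ℓ, A j ℓ := by
  constructor
  · rintro ⟨Atil, hAD⟩
    -- consecutive row sums are equal
    have hconsec : ∀ i : Fin (n - 1),
        (∑ ℓ, A ⟨i, fin_lt i⟩ ℓ) = ∑ ℓ, A ⟨(i : ℕ) + 1, fin_succ_lt i⟩ ℓ := by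
      intro i
      have h1 : (∑ j, (diffMatrix n * A) i j) = 0 := by
        rw [hAD]
        simp only [Matrix.mul_apply]
        calc (∑ j, ∑ k, Atil i k * diffMatrix n k j)
            = ∑ k, Atil i k * (∑ j, diffMatrix n k j) := by
              rw [Finset.sum_comm]
              simp [Finset.mul_sum]
          _ = 0 := by simp [D_row_sum]
      simp only [DA_entry] at h1
      rw [Finset.sum_sub_distrib] at h1
      linarith
    have hstep : ∀ m : ℕ, (hm : m < n) → (∑ ℓ, A ⟨m, hm⟩ ℓ) = ∑ ℓ, A ⟨0, by omega⟩ ℓ := by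
      intro m
      induction m with
      | zero => intro hm; rfl
      | succ k ih =>
        intro hm
        have hk : k < n - 1 := by omega
        have := hconsec ⟨k, hk⟩
        simp only at this
        rw [← this]
        exact ih (by omega)
    intro i j
    have hi := hstep i i.isLt
    have hj := hstep j j.isLt
    simp only [Fin.eta] at hi hj
    rw [hi, hj]
  · intro hrow
    refine ⟨fun i k => psum A i k, ?_⟩
    ext i j
    rw [DA_entry]
    change _ = ∑ k, psum A i k * diffMatrix n k j
    have key : ∀ k : Fin (n - 1), psum A i k * diffMatrix n k j =
        (if (k : ℕ) = (j : ℕ) then psum A i k else 0) +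
        (if (k : ℕ) + 1 = (j : ℕ) then -psum A i k else 0) := by
      intro k
      unfold diffMatrix
      split_ifs <;> first | omega | ring
    simp only [key]
    rw [Finset.sum_add_distrib]
    have hn1 : 0 < n - 1 := by omega
    by_cases h0 : (j : ℕ) = 0
    · have h2 : (∑ k : Fin (n - 1), if (k : ℕ) + 1 = (j : ℕ) then -psum A i k else 0) = 0 := by
        apply Finset.sum_eq_zero
        intro k _
        rw [if_neg]
        omega
      have h1 : (∑ k : Fin (n - 1), if (k : ℕ) = (j : ℕ) then psum A i k else 0)
          = psum A i ⟨(j : ℕ), by omega⟩ := sum_ite_nat (psum A i) _ (by omega)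
      rw [h1, h2, add_zero]
      unfold psum
      have hc : ∀ ℓ : Fin n, ((ℓ : ℕ) ≤ ((⟨(j : ℕ), by omega⟩ : Fin (n-1)) : ℕ))
          = ((ℓ : ℕ) = (j : ℕ)) := fun ℓ => propext (by simp; omega)
      simp only [hc]
      rw [sum_ite_nat (fun ℓ => A ⟨i, fin_lt i⟩ ℓ - A ⟨(i:ℕ)+1, fin_succ_lt i⟩ ℓ) _ j.isLt]
    · by_cases hlast : (j : ℕ) = n - 1
      · have h1 : (∑ k : Fin (n - 1), if (k : ℕ) = (j : ℕ) then psum A i k else 0) = 0 := by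
          apply Finset.sum_eq_zero
          intro k _
          rw [if_neg]
          have := k.isLt
          omega
        have hc : ∀ k : Fin (n - 1), ((k : ℕ) + 1 = (j : ℕ)) = ((k : ℕ) = n - 2) :=
          fun k => propext (by omega)
        have h2 : (∑ k : Fin (n - 1), if (k : ℕ) + 1 = (j : ℕ) then -psum A i k else 0)
            = -psum A i ⟨n - 2, nsub2_lt hn⟩ := by
          simp only [hc]
          exact sum_ite_nat (fun k => -psum A i k) _ (nsub2_lt hn)
        rw [h1, h2, zero_add]
        unfold psum
        have hp : ∀ ℓ : Fin n,
            (if (ℓ : ℕ) ≤ ((⟨n - 2, nsub2_lt hn⟩ : Fin (n-1)) : ℕ) then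
              A ⟨i, fin_lt i⟩ ℓ - A ⟨(i:ℕ)+1, fin_succ_lt i⟩ ℓ else 0)
            = (A ⟨i, fin_lt i⟩ ℓ - A ⟨(i:ℕ)+1, fin_succ_lt i⟩ ℓ)
              - (if (ℓ : ℕ) = n - 1 then A ⟨i, fin_lt i⟩ ℓ - A ⟨(i:ℕ)+1, fin_succ_lt i⟩ ℓ else 0) := by
          intro ℓ
          have := ℓ.isLt
          simp only [Fin.val_mk]
          split_ifs
          all_goals try ring
          all_goals (exfalso; omega)
        simp only [hp]
        rw [Finset.sum_sub_distrib, Finset.sum_sub_distrib,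
          sum_ite_nat (fun ℓ => A ⟨i, fin_lt i⟩ ℓ - A ⟨(i:ℕ)+1, fin_succ_lt i⟩ ℓ) _ (nsub1_lt hn)]
        rw [hrow ⟨i, fin_lt i⟩ ⟨(i:ℕ)+1, fin_succ_lt i⟩]
        have hj : (⟨n - 1, nsub1_lt hn⟩ : Fin n) = j :=
          Fin.ext hlast.symm
        rw [← hj]
        ring
      · -- middle case: 1 ≤ j ≤ n - 2
        have h1 : (∑ k : Fin (n - 1), if (k : ℕ) = (j : ℕ) then psum A i k else 0)
            = psum A i ⟨(j : ℕ), by have := j.isLt; omega⟩ :=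
          sum_ite_nat (psum A i) _ (by have := j.isLt; omega)
        have hc : ∀ k : Fin (n - 1), ((k : ℕ) + 1 = (j : ℕ)) = ((k : ℕ) = (j : ℕ) - 1) :=
          fun k => propext (by omega)
        have h2 : (∑ k : Fin (n - 1), if (k : ℕ) + 1 = (j : ℕ) then -psum A i k else 0)
            = -psum A i ⟨(j : ℕ) - 1, by have := j.isLt; omega⟩ := by
          simp only [hc]
          exact sum_ite_nat (fun k => -psum A i k) _ (by have := j.isLt; omega)
        rw [h1, h2]
        unfold psum
        rw [← sub_eq_add_neg, ← Finset.sum_sub_distrib]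
        have hp : ∀ ℓ : Fin n,
            ((if (ℓ : ℕ) ≤ ((⟨(j:ℕ), by have := j.isLt; omega⟩ : Fin (n-1)) : ℕ) then
              A ⟨i, fin_lt i⟩ ℓ - A ⟨(i:ℕ)+1, fin_succ_lt i⟩ ℓ else 0)
            - (if (ℓ : ℕ) ≤ ((⟨(j:ℕ) - 1, by have := j.isLt; omega⟩ : Fin (n-1)) : ℕ) then
              A ⟨i, fin_lt i⟩ ℓ - A ⟨(i:ℕ)+1, fin_succ_lt i⟩ ℓ else 0))
            = (if (ℓ : ℕ) = (j : ℕ) then A ⟨i, fin_lt i⟩ ℓ - A ⟨(i:ℕ)+1, fin_succ_lt i⟩ ℓ else 0) := by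
          intro ℓ
          have := j.isLt
          simp only [Fin.val_mk]
          split_ifs
          all_goals try ring
          all_goals (exfalso; omega)
        simp only [hp]
        rw [sum_ite_nat (fun ℓ => A ⟨i, fin_lt i⟩ ℓ - A ⟨(i:ℕ)+1, fin_succ_lt i⟩ ℓ) _ j.isLt]
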